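/- arXiv:2406.07920 — 2 statements merged into one kernel-verified Lean document; each statement's English description precedes it below -/
import Mathlib

section
/- Let P₁,...,P_L be probability distributions on a finite set O such that D_B(P_i, P_j) ≥ log L for all i ≠ j. Then for any probability distributions μ, ν on {1,...,L}, the total variation distance between the mixtures satisfies D_TV(E_{i∼μ}[P_i], E_{j∼ν}[P_j]) ≥ (1/2)·D_TV(μ, ν). -/
/-!
Write `μ - ν = a⁺ - a⁻`, so that the difference of the two mixtures is `p - q` with
`p = ∑ aᵢ⁺ Pᵢ` and `q = ∑ aᵢ⁻ Pᵢ`, two measures of equal mass `S = ‖μ - ν‖₁ / 2`.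
Then `‖p - q‖₁ ≥ 2S - 2 BC(p, q)`, and the Bhattacharyya coefficient of two mixtures is at most
`∑ᵢⱼ √(aᵢ⁺ aⱼ⁻) BC(Pᵢ, Pⱼ)`. Since `a⁺` and `a⁻` have disjoint supports only the pairs `i ≠ j`
contribute, each with `BC(Pᵢ, Pⱼ) ≤ 1/L`, and
`(∑ √aᵢ⁺)(∑ √aⱼ⁻) ≤ (∑ √|aᵢ|)² / 4 ≤ L · ∑ |aᵢ| / 4 = L S / 2` by AM-GM (using
`√a⁺ + √a⁻ = √|a|`) and Cauchy-Schwarz.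
Hence `BC(p, q) ≤ S / 2` and `‖p - q‖₁ ≥ S`.
-/

open Finset Real

noncomputable def bhattacharyyaCoeff {O : Type*} [Fintype O] (p q : O → ℝ) : ℝ :=
  ∑ x, √(p x * q x)

theorem le_inv_of_log_le_neg_log {b c : ℝ} (hb : 0 ≤ b) (hc : 0 < c) (h : log c ≤ -log b) :
    b ≤ c⁻¹ := by
  rcases hb.eq_or_lt with rfl | hb
  · positivity
  · rw [← log_le_log_iff hb (inv_pos.2 hc), log_inv]
    linarith

theorem sqrt_sum_le_sum_sqrt {ι : Type*} (s : Finset ι) {f : ι → ℝ} (hf : ∀ i ∈ s, 0 ≤ f i) :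
    √(∑ i ∈ s, f i) ≤ ∑ i ∈ s, √(f i) := by
  rw [sqrt_le_left (sum_nonneg fun i _ => sqrt_nonneg (f i))]
  calc ∑ i ∈ s, f i = ∑ i ∈ s, √(f i) ^ 2 := sum_congr rfl fun i hi => (sq_sqrt (hf i hi)).symm
    _ ≤ (∑ i ∈ s, √(f i)) ^ 2 := sum_sq_le_sq_sum_of_nonneg fun i _ => sqrt_nonneg (f i)

theorem sqrt_posPart_add_sqrt_negPart (a : ℝ) : √a⁺ + √a⁻ = √|a| := by
  rcases le_total 0 a with h | h
  · simp [posPart_eq_self.2 h, negPart_eq_zero.2 h, abs_of_nonneg h]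
  · simp [posPart_eq_zero.2 h, negPart_eq_neg.2 h, abs_of_nonpos h]

theorem posPart_mul_negPart_eq_zero (a : ℝ) : a⁺ * a⁻ = 0 := by
  rcases le_total 0 a with h | h
  · simp [negPart_eq_zero.2 h]
  · simp [posPart_eq_zero.2 h]

section Mixtures

variable {ι κ O : Type*} [Fintype ι] [Fintype κ] [Fintype O]

theorem sum_add_sum_sub_two_mul_bhattacharyyaCoeff_le {p q : O → ℝ}
    (hp : ∀ x, 0 ≤ p x) (hq : ∀ x, 0 ≤ q x) :
    ∑ x, p x + ∑ x, q x - 2 * bhattacharyyaCoeff p q ≤ ∑ x, |p x - q x| := by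
  have hmin : ∀ x, min (p x) (q x) ≤ √(p x * q x) := fun x =>
    (le_sqrt (le_min (hp x) (hq x)) (mul_nonneg (hp x) (hq x))).2 <| by
      rw [sq]; exact mul_le_mul (min_le_left _ _) (min_le_right _ _) (le_min (hp x) (hq x)) (hp x)
  have habs : ∀ x, |p x - q x| = p x + q x - 2 * min (p x) (q x) := fun x => by
    rw [abs_sub_comm, ← max_sub_min_eq_abs, ← min_add_max (p x) (q x)]
    ring
  simp only [habs, bhattacharyyaCoeff, sum_sub_distrib, sum_add_distrib, ← mul_sum]
  linarith [sum_le_sum fun x (_ : x ∈ univ) => hmin x]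

theorem sum_mixture {P : ι → O → ℝ} (hP1 : ∀ i, ∑ x, P i x = 1) (w : ι → ℝ) :
    ∑ x, ∑ i, w i * P i x = ∑ i, w i := by
  rw [sum_comm]
  simp [← mul_sum, hP1]

theorem sqrt_sum_mul_sum_le {f : ι → ℝ} {g : κ → ℝ} (hf : ∀ i, 0 ≤ f i) (hg : ∀ i, 0 ≤ g i) :
    √((∑ i, f i) * ∑ j, g j) ≤ (∑ i, √(f i)) * ∑ j, √(g j) := by
  rw [sqrt_mul (sum_nonneg fun i _ => hf i)]
  exact mul_le_mul (sqrt_sum_le_sum_sqrt _ fun i _ => hf i) (sqrt_sum_le_sum_sqrt _ fun i _ => hg i)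
    (sqrt_nonneg _) (sum_nonneg fun i _ => sqrt_nonneg _)

theorem bhattacharyyaCoeff_mixture_le {P : ι → O → ℝ} {Q : κ → O → ℝ}
    (hP : ∀ i x, 0 ≤ P i x) (hQ : ∀ j x, 0 ≤ Q j x) {a : ι → ℝ} {b : κ → ℝ}
    (ha : ∀ i, 0 ≤ a i) (hb : ∀ j, 0 ≤ b j) :
    bhattacharyyaCoeff (fun x => ∑ i, a i * P i x) (fun x => ∑ j, b j * Q j x) ≤
      ∑ i, ∑ j, √(a i * b j) * bhattacharyyaCoeff (P i) (Q j) := by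
  have hsplit : ∀ x i j, √(a i * P i x) * √(b j * Q j x) = √(a i * b j) * √(P i x * Q j x) :=
    fun x i j => by
      rw [← sqrt_mul (mul_nonneg (ha i) (hP i x)), ← sqrt_mul (mul_nonneg (ha i) (hb j))]
      ring_nf
  calc bhattacharyyaCoeff (fun x => ∑ i, a i * P i x) (fun x => ∑ j, b j * Q j x)
      ≤ ∑ x, (∑ i, √(a i * P i x)) * ∑ j, √(b j * Q j x) :=
        sum_le_sum fun x _ => sqrt_sum_mul_sum_le (fun i => mul_nonneg (ha i) (hP i x))
          (fun j => mul_nonneg (hb j) (hQ j x))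
    _ = ∑ i, ∑ j, √(a i * b j) * bhattacharyyaCoeff (P i) (Q j) := by
      simp only [sum_mul_sum, hsplit]
      simp only [bhattacharyyaCoeff, mul_sum]
      rw [sum_comm]
      exact sum_congr rfl fun i _ => sum_comm

theorem sum_sqrt_posPart_mul_negPart_mul_le {B : ι → ι → ℝ} {c : ℝ}
    (hB : ∀ i j, i ≠ j → B i j ≤ c) (a : ι → ℝ) :
    ∑ i, ∑ j, √((a i)⁺ * (a j)⁻) * B i j ≤ c * ((∑ i, √(a i)⁺) * ∑ j, √(a j)⁻) := by
  rw [sum_mul_sum, mul_sum]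
  refine sum_le_sum fun i _ => ?_
  rw [mul_sum]
  refine sum_le_sum fun j _ => ?_
  rw [← sqrt_mul (posPart_nonneg _), mul_comm c]
  rcases eq_or_ne i j with rfl | hij
  · simp [posPart_mul_negPart_eq_zero]
  · exact mul_le_mul_of_nonneg_left (hB i j hij) (sqrt_nonneg _)

theorem sum_sqrt_posPart_mul_sum_sqrt_negPart_le (a : ι → ℝ) :
    (∑ i, √(a i)⁺) * ∑ j, √(a j)⁻ ≤ Fintype.card ι * (∑ i, |a i|) / 4 := by
  have hsum : ∑ i, √(a i)⁺ + ∑ j, √(a j)⁻ = ∑ i, √|a i| := by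
    rw [← sum_add_distrib]
    exact sum_congr rfl fun i _ => sqrt_posPart_add_sqrt_negPart (a i)
  calc (∑ i, √(a i)⁺) * ∑ j, √(a j)⁻ ≤ (∑ i, √(a i)⁺ + ∑ j, √(a j)⁻) ^ 2 / 4 := by
        nlinarith [sq_nonneg (∑ i, √(a i)⁺ - ∑ j, √(a j)⁻)]
    _ = (∑ i, √|a i|) ^ 2 / 4 := by rw [hsum]
    _ ≤ Fintype.card ι * (∑ i, √|a i| ^ 2) / 4 := by
        gcongr
        exact sq_sum_le_card_mul_sum_sq
    _ = Fintype.card ι * (∑ i, |a i|) / 4 := by simp [sq_sqrt (abs_nonneg _)]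

theorem half_sum_abs_le_sum_abs_mixture {P : ι → O → ℝ} (hP0 : ∀ i x, 0 ≤ P i x)
    (hP1 : ∀ i, ∑ x, P i x = 1)
    (hsep : ∀ i j, i ≠ j → bhattacharyyaCoeff (P i) (P j) ≤ (Fintype.card ι : ℝ)⁻¹)
    {a : ι → ℝ} (ha : ∑ i, a i = 0) :
    (∑ i, |a i|) / 2 ≤ ∑ x, |∑ i, a i * P i x| := by
  set p : O → ℝ := fun x => ∑ i, (a i)⁺ * P i x
  set q : O → ℝ := fun x => ∑ i, (a i)⁻ * P i x
  have hdecomp : ∀ x, ∑ i, a i * P i x = p x - q x := fun x => by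
    simp only [p, q, ← sum_sub_distrib, ← sub_mul, posPart_sub_negPart]
  have hbalance : ∑ i, (a i)⁺ = ∑ i, (a i)⁻ := by
    have hdiff : ∑ i, ((a i)⁺ - (a i)⁻) = 0 := by simpa only [posPart_sub_negPart] using ha
    rw [sum_sub_distrib] at hdiff
    linarith
  have hsum_abs : ∑ i, |a i| = ∑ i, (a i)⁺ + ∑ i, (a i)⁻ := by
    rw [← sum_add_distrib]
    exact sum_congr rfl fun i _ => (posPart_add_negPart (a i)).symm
  have hBC : bhattacharyyaCoeff p q ≤ (∑ i, |a i|) / 4 := calc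
    _ ≤ ∑ i, ∑ j, √((a i)⁺ * (a j)⁻) * bhattacharyyaCoeff (P i) (P j) :=
      bhattacharyyaCoeff_mixture_le hP0 hP0 (fun i => posPart_nonneg _) (fun j => negPart_nonneg _)
    _ ≤ (Fintype.card ι : ℝ)⁻¹ * ((∑ i, √(a i)⁺) * ∑ j, √(a j)⁻) :=
      sum_sqrt_posPart_mul_negPart_mul_le hsep a
    _ ≤ (Fintype.card ι : ℝ)⁻¹ * (Fintype.card ι * (∑ i, |a i|) / 4) := by
      gcongr; exact sum_sqrt_posPart_mul_sum_sqrt_negPart_le a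
    _ ≤ (∑ i, |a i|) / 4 := by
      rw [← mul_div_assoc, ← mul_assoc]
      gcongr
      exact mul_le_of_le_one_left (sum_nonneg fun i _ => abs_nonneg _)
        (inv_mul_le_one_of_le₀ le_rfl (Nat.cast_nonneg _))
  have htv := sum_add_sum_sub_two_mul_bhattacharyyaCoeff_le (p := p) (q := q)
    (fun x => sum_nonneg fun i _ => mul_nonneg (posPart_nonneg _) (hP0 i x))
    (fun x => sum_nonneg fun i _ => mul_nonneg (negPart_nonneg _) (hP0 i x))
  rw [sum_mixture hP1, sum_mixture hP1] at htv
  simp only [hdecomp]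
  linarith

end Mixtures

theorem tv_mixture_lower_bound_general
    {O : Type*} [Fintype O] {L : ℕ} (P : Fin L → O → ℝ)
    (hP0 : ∀ i x, 0 ≤ P i x) (hP1 : ∀ i, ∑ x, P i x = 1)
    (hsep : ∀ i j, i ≠ j →
      -Real.log (∑ x, Real.sqrt (P i x * P j x)) ≥ Real.log (L : ℝ))
    (μ ν : Fin L → ℝ)
    (hμ1 : ∑ i, μ i = 1)
    (hν1 : ∑ i, ν i = 1) :
    (1 / 2) * ∑ x, |(∑ i, μ i * P i x) - ∑ j, ν j * P j x| ≥
      (1 / 2) * ((1 / 2) * ∑ i, |μ i - ν i|) := by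
  have hBC : ∀ i j, i ≠ j → bhattacharyyaCoeff (P i) (P j) ≤ (Fintype.card (Fin L) : ℝ)⁻¹ :=
    fun i j hij => by
      rw [Fintype.card_fin]
      exact le_inv_of_log_le_neg_log (sum_nonneg fun x _ => sqrt_nonneg _)
        (Nat.cast_pos.2 i.pos) (hsep i j hij)
  have hbalance : ∑ i, (μ i - ν i) = 0 := by rw [sum_sub_distrib, hμ1, hν1, sub_self]
  have hmix := half_sum_abs_le_sum_abs_mixture hP0 hP1 hBC hbalance
  simp only [sub_mul, sum_sub_distrib] at hmix
  linarith

/-- If `P₁,...,P_L` are probability distributions on a finite set `O` with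
pairwise Bhattacharyya divergence at least `log L`, then for any mixing distributions
`μ, ν` on `[L]`, `D_TV(E_{i∼μ}[P_i], E_{j∼ν}[P_j]) ≥ (1/2)·D_TV(μ,ν)`. -/
theorem tv_mixture_lower_bound
    {O : Type*} [Fintype O] {L : ℕ} (P : Fin L → O → ℝ)
    (hP0 : ∀ i x, 0 ≤ P i x) (hP1 : ∀ i, ∑ x, P i x = 1)
    (hsep : ∀ i j, i ≠ j →
      -Real.log (∑ x, Real.sqrt (P i x * P j x)) ≥ Real.log (L : ℝ))
    (μ ν : Fin L → ℝ)
    (hμ0 : ∀ i, 0 ≤ μ i) (hμ1 : ∑ i, μ i = 1)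
    (hν0 : ∀ i, 0 ≤ ν i) (hν1 : ∑ i, ν i = 1) :
    (1 / 2) * ∑ x, |(∑ i, μ i * P i x) - ∑ j, ν j * P j x| ≥
      (1 / 2) * ((1 / 2) * ∑ i, |μ i - ν i|) :=
  tv_mixture_lower_bound_general P hP0 hP1 hsep μ ν hμ1 hν1
end

section
/- Existence of moment-matching disjoint mixtures: let d, N, K, H be positive integers with N ≥ C(K+d-1, d) + 1 and let δ ∈ (0,1]. For any x₁,...,x_N ∈ [-δ,δ]^d, there exist probability distributions ξ₀, ξ₁ on {1,...,N} with disjoint supports such that D_TV( E_{i∼ξ₀}[Q_{xᵢ}^{⊗H}], E_{i∼ξ₁}[Q_{xᵢ}^{⊗H}] )² ≤ ∑_{k=K}^H (e·H·δ²/K)^k, where Q_x ∈ Δ([2d]) is defined by Q_x(2j-1) = (1+x[j])/(2d), Q_x(2j) = (1-x[j])/(2d). -/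
/-!
There are only `C(K+d-1, d)` monomials of degree `< K` in `d` variables, so some nonzero
`v ∈ ℝᴺ` annihilates all of them at the points `xᵢ`; the constant monomial forces `∑ vᵢ = 0`,
and the normalised positive and negative parts of `v` are the mixing weights `ξ₀, ξ₁`.
For `w = ξ₀ - ξ₁` and `F(o) = ∑ᵢ wᵢ Q_{xᵢ}^{⊗H}(o)`, Cauchy–Schwarz over the `(2d)^H` outcomes
and the collision identity `∑_z Q_x(z) Q_y(z) = (1 + ⟨x, y⟩/d)/(2d)` give
`(∑ₒ |F o|)² ≤ ∑ₖ C(H,k) d⁻ᵏ ∑_{|g| = k} (∑ᵢ wᵢ xᵢ^g)²`.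
The terms with `k < K` vanish, and each remaining one is at most
`4 C(H,k) δ^{2k} ≤ 4 (e H δ² / K)^k`.
-/

/-- The perturbed-uniform distribution `Q_x` on `[2d]`, encoded on `Fin d × Bool`:
`Q_x (j, true) = (1 + x j)/(2d)` and `Q_x (j, false) = (1 - x j)/(2d)`. -/
noncomputable def Qdist (d : ℕ) (x : Fin d → ℝ) : Fin d × Bool → ℝ :=
  fun z => (1 + (if z.2 then x z.1 else -x z.1)) / (2 * d)

open Finset Real

theorem choose_le_exp_mul_div_pow (n k : ℕ) : (n.choose k : ℝ) ≤ (exp 1 * n / k) ^ k := by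
  rcases k.eq_zero_or_pos with rfl | hk
  · simp
  have hkk : (k : ℝ) ^ k / k.factorial ≤ exp 1 ^ k := by
    simpa [← exp_nat_mul] using pow_div_factorial_le_exp (x := (k : ℝ)) k.cast_nonneg k
  calc (n.choose k : ℝ) ≤ n ^ k / k.factorial := Nat.choose_le_pow_div k n
    _ = n ^ k / k ^ k * (k ^ k / k.factorial) := by field_simp
    _ ≤ n ^ k / k ^ k * exp 1 ^ k := by gcongr
    _ = (exp 1 * n / k) ^ k := by rw [div_pow, mul_pow]; ring

section Moments

variable {ι : Type*} [Fintype ι] {d : ℕ}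

noncomputable def mixtureMoment (w : ι → ℝ) (x : ι → Fin d → ℝ) {k : ℕ} (g : Fin k → Fin d) : ℝ :=
  ∑ i, w i * ∏ t, x i (g t)

@[simp]
theorem mixtureMoment_smul (c : ℝ) (w : ι → ℝ) (x : ι → Fin d → ℝ) {k : ℕ} (g : Fin k → Fin d) :
    mixtureMoment (c • w) x g = c * mixtureMoment w x g := by
  simp [mixtureMoment, mul_sum, mul_assoc]

/-- `none` plays the role of a variable equal to `1`, so these are the monomials of degree `≤ n`
in `y`, one for each of the `C(n + d, d)` points of `Sym (Option (Fin d)) n`. -/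
def homogeneousMonomial (y : Fin d → ℝ) {n : ℕ} (s : Sym (Option (Fin d)) n) : ℝ :=
  ((s : Multiset (Option (Fin d))).map fun a => a.elim 1 y).prod

theorem exists_homogeneousMonomial_eq_prod {k n : ℕ} (hk : k ≤ n) (g : Fin k → Fin d) :
    ∃ s : Sym (Option (Fin d)) n, ∀ y, homogeneousMonomial y s = ∏ t, y (g t) := by
  refine ⟨⟨univ.val.map (some ∘ g) + Multiset.replicate (n - k) none, by simp; omega⟩,
    fun y => ?_⟩
  simp only [homogeneousMonomial, Sym.coe_mk, Multiset.map_add, Multiset.map_replicate,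
    Option.elim_none, Multiset.prod_add, Multiset.prod_replicate, one_pow, mul_one,
    Multiset.map_map, Finset.prod_eq_multiset_prod]
  rfl

theorem card_sym_option_fin (d n : ℕ) :
    Fintype.card (Sym (Option (Fin d)) n) = (n + d).choose d := by
  rw [Sym.card_sym_eq_choose, Fintype.card_option, Fintype.card_fin, ← Nat.choose_symm_add]
  congr 1; omega

theorem exists_ne_zero_mixtureMoment_eq_zero {K : ℕ} (x : ι → Fin d → ℝ)
    (hcard : (K - 1 + d).choose d < Fintype.card ι) :
    ∃ v : ι → ℝ, v ≠ 0 ∧ ∀ k < K, ∀ g : Fin k → Fin d, mixtureMoment v x g = 0 := by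
  have hdep : ¬ LinearIndependent ℝ fun i (s : Sym (Option (Fin d)) (K - 1)) =>
      homogeneousMonomial (x i) s := fun h => by
    have := h.fintype_card_le_finrank
    rw [Module.finrank_fintype_fun_eq_card, card_sym_option_fin] at this
    omega
  obtain ⟨v, hv, i, hi⟩ := Fintype.not_linearIndependent_iff.mp hdep
  refine ⟨v, fun h => hi (congrFun h i), fun k hk g => ?_⟩
  obtain ⟨s, hs⟩ := exists_homogeneousMonomial_eq_prod (by omega : k ≤ K - 1) g
  simpa [mixtureMoment, hs] using congrFun hv s

end Moments

theorem exists_probVec_sub_probVec_eq_smul {ι : Type*} [Fintype ι] {v : ι → ℝ} (hv : v ≠ 0)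
    (hsum : ∑ i, v i = 0) :
    ∃ ξ₀ ξ₁ : ι → ℝ, (∀ i, 0 ≤ ξ₀ i) ∧ ∑ i, ξ₀ i = 1 ∧ (∀ i, 0 ≤ ξ₁ i) ∧ ∑ i, ξ₁ i = 1 ∧
      (∀ i, ξ₀ i = 0 ∨ ξ₁ i = 0) ∧ ∃ c : ℝ, ξ₀ - ξ₁ = c • v := by
  set s := ∑ i, (v i)⁺
  have hneg : ∑ i, (v i)⁻ = s := by
    have h : ∑ i, ((v i)⁺ - (v i)⁻) = ∑ i, v i := sum_congr rfl fun i _ => posPart_sub_negPart _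
    rw [sum_sub_distrib, hsum, sub_eq_zero] at h
    exact h.symm
  have hs : 0 < s := by
    refine (sum_nonneg fun i _ => posPart_nonneg (v i)).lt_of_ne fun h => hv ?_
    have hle : v ≤ 0 := posPart_eq_zero.mp <| funext fun i =>
      (sum_eq_zero_iff_of_nonneg fun i _ => posPart_nonneg (v i)).mp h.symm i (mem_univ i)
    exact funext fun i => (sum_eq_zero_iff_of_nonpos fun i _ => hle i).mp hsum i (mem_univ i)
  refine ⟨s⁻¹ • v⁺, s⁻¹ • v⁻, fun i => smul_nonneg (inv_nonneg.mpr hs.le) (posPart_nonneg (v i)),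
    ?_, fun i => smul_nonneg (inv_nonneg.mpr hs.le) (negPart_nonneg (v i)), ?_,
    fun i => ?_, s⁻¹, by rw [← smul_sub, posPart_sub_negPart]⟩
  · simp [← mul_sum, s, hs.ne']
  · simp [← mul_sum, hneg, hs.ne']
  · rcases le_total (v i) 0 with h | h
    · simp [posPart_eq_zero.mpr h]
    · simp [negPart_eq_zero.mpr h]

theorem sum_abs_sub_le_two {ι : Type*} [Fintype ι] {p q : ι → ℝ} (hp : ∀ i, 0 ≤ p i)
    (hp1 : ∑ i, p i = 1) (hq : ∀ i, 0 ≤ q i) (hq1 : ∑ i, q i = 1) : ∑ i, |p i - q i| ≤ 2 :=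
  calc ∑ i, |p i - q i| ≤ ∑ i, (p i + q i) := sum_le_sum fun i _ =>
        (abs_sub _ _).trans_eq (by rw [abs_of_nonneg (hp i), abs_of_nonneg (hq i)])
    _ = 2 := by rw [sum_add_distrib, hp1, hq1]; norm_num

theorem sum_prod_mul_prod_eq_pow {α R : Type*} [Fintype α] [CommSemiring R] (p q : α → R)
    (H : ℕ) : ∑ o : Fin H → α, (∏ j, p (o j)) * ∏ j, q (o j) = (∑ z, p z * q z) ^ H := by
  simp_rw [← Finset.prod_mul_distrib]
  exact (Fintype.sum_pow (fun z => p z * q z) H).symm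

theorem sum_Qdist_mul_Qdist {d : ℕ} (hd : d ≠ 0) (x y : Fin d → ℝ) :
    ∑ z, Qdist d x z * Qdist d y z = (1 + (∑ j, x j * y j) / d) / (2 * d) := by
  have hd' : (d : ℝ) ≠ 0 := Nat.cast_ne_zero.mpr hd
  calc ∑ z, Qdist d x z * Qdist d y z = ∑ j, (1 + x j * y j) / (2 * d ^ 2) := by
        simp only [Qdist, Fintype.sum_prod_type, Fintype.sum_bool, if_true, Bool.false_eq_true,
          if_false]
        exact sum_congr rfl fun j _ => by field_simp; ring
    _ = (1 + (∑ j, x j * y j) / d) / (2 * d) := by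
      rw [← sum_div, sum_add_distrib, sum_const, card_univ, Fintype.card_fin]
      field_simp
      ring

section Mixture

variable {ι : Type*} [Fintype ι] {d : ℕ} (w : ι → ℝ) (x : ι → Fin d → ℝ)

theorem sum_mul_mul_inner_pow_eq_sum_sq (k : ℕ) :
    ∑ i, ∑ i', w i * w i' * (∑ j, x i j * x i' j) ^ k =
      ∑ g : Fin k → Fin d, mixtureMoment w x g ^ 2 := by
  simp_rw [Fintype.sum_pow (R := ℝ), Finset.prod_mul_distrib, mixtureMoment, sq, sum_mul_sum,
    mul_sum]
  symm
  rw [Finset.sum_comm]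
  refine Finset.sum_congr rfl fun i _ => ?_
  rw [Finset.sum_comm]
  exact Finset.sum_congr rfl fun i' _ => Finset.sum_congr rfl fun g _ => by ring

theorem pow_mul_sum_sq_mixture_eq (hd : d ≠ 0) (H : ℕ) :
    (2 * d : ℝ) ^ H * ∑ o : Fin H → Fin d × Bool, (∑ i, w i * ∏ j, Qdist d (x i) (o j)) ^ 2 =
      ∑ k ∈ range (H + 1),
        H.choose k * (∑ g : Fin k → Fin d, mixtureMoment w x g ^ 2) / d ^ k := by
  have hcollision : ∀ i i', (2 * d : ℝ) ^ H * ∑ o : Fin H → Fin d × Bool,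
      (∏ j, Qdist d (x i) (o j)) * ∏ j, Qdist d (x i') (o j) =
        ∑ k ∈ range (H + 1), H.choose k * (∑ j, x i j * x i' j) ^ k / d ^ k := by
    intro i i'
    rw [sum_prod_mul_prod_eq_pow, sum_Qdist_mul_Qdist hd, ← mul_pow,
      mul_div_cancel₀ _ (by positivity), add_comm, add_pow]
    exact sum_congr rfl fun k _ => by rw [div_pow]; ring
  calc (2 * d : ℝ) ^ H * ∑ o : Fin H → Fin d × Bool, (∑ i, w i * ∏ j, Qdist d (x i) (o j)) ^ 2
      = ∑ i, ∑ i', w i * w i' * ((2 * d : ℝ) ^ H * ∑ o : Fin H → Fin d × Bool,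
          (∏ j, Qdist d (x i) (o j)) * ∏ j, Qdist d (x i') (o j)) := by
        simp_rw [sq, sum_mul_sum, mul_sum]
        rw [Finset.sum_comm]
        refine Finset.sum_congr rfl fun i _ => ?_
        rw [Finset.sum_comm]
        exact Finset.sum_congr rfl fun i' _ => Finset.sum_congr rfl fun o _ => by ring
    _ = ∑ k ∈ range (H + 1),
          H.choose k * (∑ i, ∑ i', w i * w i' * (∑ j, x i j * x i' j) ^ k) / d ^ k := by
        simp_rw [hcollision, mul_sum, sum_div]
        symm
        rw [Finset.sum_comm]
        refine Finset.sum_congr rfl fun i _ => ?_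
        rw [Finset.sum_comm]
        exact Finset.sum_congr rfl fun i' _ => Finset.sum_congr rfl fun k _ => by ring
    _ = _ := by simp_rw [sum_mul_mul_inner_pow_eq_sum_sq]

theorem sq_mixtureMoment_le {δ : ℝ} (hx : ∀ i j, |x i j| ≤ δ) {k : ℕ} (g : Fin k → Fin d) :
    mixtureMoment w x g ^ 2 ≤ (∑ i, |w i|) ^ 2 * (δ ^ 2) ^ k := by
  have hprod : ∀ i, |∏ t, x i (g t)| ≤ |δ| ^ k := fun i => by
    calc |∏ t, x i (g t)| = ∏ t, |x i (g t)| := abs_prod _ _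
      _ ≤ ∏ _t : Fin k, |δ| :=
        prod_le_prod (fun t _ => abs_nonneg _) fun t _ => (hx i (g t)).trans (le_abs_self δ)
      _ = |δ| ^ k := by simp
  have habs : |mixtureMoment w x g| ≤ (∑ i, |w i|) * |δ| ^ k :=
    calc |mixtureMoment w x g| ≤ ∑ i, |w i| * |∏ t, x i (g t)| := by
          simpa only [mixtureMoment, abs_mul] using
            abs_sum_le_sum_abs (fun i => w i * ∏ t, x i (g t)) univ
      _ ≤ ∑ i, |w i| * |δ| ^ k := by gcongr with i; exact hprod i
      _ = (∑ i, |w i|) * |δ| ^ k := (sum_mul _ _ _).symm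
  calc mixtureMoment w x g ^ 2 = |mixtureMoment w x g| ^ 2 := (sq_abs _).symm
    _ ≤ ((∑ i, |w i|) * |δ| ^ k) ^ 2 := by gcongr
    _ = (∑ i, |w i|) ^ 2 * (δ ^ 2) ^ k := by rw [mul_pow, ← pow_mul, pow_mul', sq_abs]

theorem choose_mul_sum_sq_mixtureMoment_div_le {δ : ℝ} (hx : ∀ i j, |x i j| ≤ δ) {K k : ℕ}
    (hK : 0 < K) (hKk : K ≤ k) (H : ℕ) :
    H.choose k * (∑ g : Fin k → Fin d, mixtureMoment w x g ^ 2) / d ^ k ≤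
      (∑ i, |w i|) ^ 2 * (exp 1 * H * δ ^ 2 / K) ^ k := by
  have hmoments : (∑ g : Fin k → Fin d, mixtureMoment w x g ^ 2) / d ^ k ≤
      (∑ i, |w i|) ^ 2 * (δ ^ 2) ^ k := by
    refine div_le_of_le_mul₀ (by positivity) (by positivity) ?_
    simpa [mul_comm] using sum_le_sum fun g (_ : g ∈ univ) => sq_mixtureMoment_le w x hx g
  have hchoose : (H.choose k : ℝ) ≤ (exp 1 * H / K) ^ k :=
    (choose_le_exp_mul_div_pow H k).trans (by gcongr)
  calc H.choose k * (∑ g : Fin k → Fin d, mixtureMoment w x g ^ 2) / d ^ k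
      ≤ (exp 1 * H / K) ^ k * ((∑ i, |w i|) ^ 2 * (δ ^ 2) ^ k) := by
        rw [mul_div_assoc]; gcongr
    _ = (∑ i, |w i|) ^ 2 * (exp 1 * H * δ ^ 2 / K) ^ k := by
        rw [mul_left_comm, ← mul_pow, div_mul_eq_mul_div]

theorem sq_sum_abs_mixture_le (hd : d ≠ 0) {K : ℕ} (hK : 0 < K) {δ : ℝ}
    (hx : ∀ i j, |x i j| ≤ δ) (hmom : ∀ k < K, ∀ g : Fin k → Fin d, mixtureMoment w x g = 0)
    (H : ℕ) :
    (∑ o : Fin H → Fin d × Bool, |∑ i, w i * ∏ j, Qdist d (x i) (o j)|) ^ 2 ≤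
      (∑ i, |w i|) ^ 2 * ∑ k ∈ Icc K H, (exp 1 * H * δ ^ 2 / K) ^ k := by
  calc (∑ o : Fin H → Fin d × Bool, |∑ i, w i * ∏ j, Qdist d (x i) (o j)|) ^ 2
      ≤ (2 * d : ℝ) ^ H *
          ∑ o : Fin H → Fin d × Bool, (∑ i, w i * ∏ j, Qdist d (x i) (o j)) ^ 2 := by
        simpa [sq_abs, mul_comm] using
          sq_sum_le_card_mul_sum_sq (s := univ) (f := fun o : Fin H → Fin d × Bool =>
            |∑ i, w i * ∏ j, Qdist d (x i) (o j)|)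
    _ = ∑ k ∈ range (H + 1),
          H.choose k * (∑ g : Fin k → Fin d, mixtureMoment w x g ^ 2) / d ^ k :=
        pow_mul_sum_sq_mixture_eq w x hd H
    _ = ∑ k ∈ Icc K H, H.choose k * (∑ g : Fin k → Fin d, mixtureMoment w x g ^ 2) / d ^ k := by
        refine (sum_subset (fun k hk => ?_) fun k hk hkK => ?_).symm
        · simp only [mem_Icc, mem_range] at hk ⊢; omega
        · have hk : k < K := by simp only [mem_Icc, mem_range] at hk hkK; omega
          simp [hmom k hk]
    _ ≤ ∑ k ∈ Icc K H, (∑ i, |w i|) ^ 2 * (exp 1 * H * δ ^ 2 / K) ^ k :=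
        sum_le_sum fun k hk => choose_mul_sum_sq_mixtureMoment_div_le w x hx hK (mem_Icc.mp hk).1 H
    _ = (∑ i, |w i|) ^ 2 * ∑ k ∈ Icc K H, (exp 1 * H * δ ^ 2 / K) ^ k := (mul_sum _ _ _).symm

end Mixture

theorem exists_moment_matching_disjoint_mixtures_general
    (d N K H : ℕ) (hd : 1 ≤ d) (hK : 1 ≤ K)
    (hN : Nat.choose (K + d - 1) d + 1 ≤ N)
    (δ : ℝ)
    (x : Fin N → Fin d → ℝ) (hx : ∀ i j, |x i j| ≤ δ) :
    ∃ ξ₀ ξ₁ : Fin N → ℝ,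
      (∀ i, 0 ≤ ξ₀ i) ∧ (∑ i, ξ₀ i = 1) ∧
      (∀ i, 0 ≤ ξ₁ i) ∧ (∑ i, ξ₁ i = 1) ∧
      (∀ i, ξ₀ i = 0 ∨ ξ₁ i = 0) ∧
      ((1 / 2) * ∑ o : Fin H → Fin d × Bool,
          |(∑ i, ξ₀ i * ∏ j, Qdist d (x i) (o j)) -
            ∑ i, ξ₁ i * ∏ j, Qdist d (x i) (o j)|) ^ 2 ≤
        ∑ k ∈ Finset.Icc K H, (Real.exp 1 * H * δ ^ 2 / K) ^ k := by
  obtain ⟨v, hv, hvmom⟩ := exists_ne_zero_mixtureMoment_eq_zero (K := K) x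
    (by rw [Fintype.card_fin, show K - 1 + d = K + d - 1 by omega]; omega)
  obtain ⟨ξ₀, ξ₁, h₀, hs₀, h₁, hs₁, hdisj, c, hc⟩ :=
    exists_probVec_sub_probVec_eq_smul hv (by simpa [mixtureMoment] using hvmom 0 hK Fin.elim0)
  refine ⟨ξ₀, ξ₁, h₀, hs₀, h₁, hs₁, hdisj, ?_⟩
  have hmom : ∀ k < K, ∀ g : Fin k → Fin d, mixtureMoment (ξ₀ - ξ₁) x g = 0 := fun k hk g => by
    rw [hc, mixtureMoment_smul, hvmom k hk g, mul_zero]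
  have hbound := sq_sum_abs_mixture_le (ξ₀ - ξ₁) x (by omega) hK hx hmom H
  simp only [Pi.sub_apply, sub_mul, sum_sub_distrib] at hbound
  have htv := sum_abs_sub_le_two h₀ hs₀ h₁ hs₁
  set T := ∑ k ∈ Icc K H, (exp 1 * H * δ ^ 2 / K) ^ k
  have hT : 0 ≤ T := sum_nonneg fun k _ => by positivity
  calc _ = (∑ o : Fin H → Fin d × Bool, |(∑ i, ξ₀ i * ∏ j, Qdist d (x i) (o j)) -
            ∑ i, ξ₁ i * ∏ j, Qdist d (x i) (o j)|) ^ 2 / 4 := by ring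
    _ ≤ (∑ i, |ξ₀ i - ξ₁ i|) ^ 2 * T / 4 := by gcongr
    _ ≤ 2 ^ 2 * T / 4 := by gcongr
    _ = T := by ring

/-- Existence of moment-matching disjoint mixtures: if
`N ≥ C(K+d-1,d) + 1`, `δ ∈ (0,1]` and `x₁,...,x_N ∈ [-δ,δ]^d`, then there are
distributions `ξ₀, ξ₁` on `[N]` with disjoint supports such that
`D_TV(E_{i∼ξ₀}[Q_{xᵢ}^{⊗H}], E_{i∼ξ₁}[Q_{xᵢ}^{⊗H}])² ≤ ∑_{k=K}^H (e·H·δ²/K)^k`. -/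
theorem exists_moment_matching_disjoint_mixtures
    (d N K H : ℕ) (hd : 1 ≤ d) (hK : 1 ≤ K) (hH : 1 ≤ H)
    (hN : Nat.choose (K + d - 1) d + 1 ≤ N)
    (δ : ℝ) (hδ0 : 0 < δ) (hδ1 : δ ≤ 1)
    (x : Fin N → Fin d → ℝ) (hx : ∀ i j, |x i j| ≤ δ) :
    ∃ ξ₀ ξ₁ : Fin N → ℝ,
      (∀ i, 0 ≤ ξ₀ i) ∧ (∑ i, ξ₀ i = 1) ∧
      (∀ i, 0 ≤ ξ₁ i) ∧ (∑ i, ξ₁ i = 1) ∧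
      (∀ i, ξ₀ i = 0 ∨ ξ₁ i = 0) ∧
      ((1 / 2) * ∑ o : Fin H → Fin d × Bool,
          |(∑ i, ξ₀ i * ∏ j, Qdist d (x i) (o j)) -
            ∑ i, ξ₁ i * ∏ j, Qdist d (x i) (o j)|) ^ 2 ≤
        ∑ k ∈ Finset.Icc K H, (Real.exp 1 * H * δ ^ 2 / K) ^ k :=
  exists_moment_matching_disjoint_mixtures_general d N K H hd hK hN δ x hx
end
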